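/- arXiv:gr-qc/0307013 — 5 statements merged into one kernel-verified Lean document; each statement's English description precedes it below -/
import Mathlib

section
/- Let $\nu : [u_1, u_2] \times [v_1, v_2] \to \mathbb{R}$ be continuous with $\nu < 0$, satisfying $\partial_v \nu = F \nu$ where $F$ is continuous and $F(u,v) \ge H > 0$ for all $(u,v)$, and $\nu(u, v_1) = -1$. Further suppose $r(u,v) = r(0,v) + \int_0^u \nu(\bar{u}, v)\,d\bar{u}$ where $r(0, v) \le r_+$. Then $r(u, v) \le r_+ - u\, e^{H(v - v_1)}$ for all $(u,v) \in [u_1,u_2]\times[v_1,v_2]$ with $u \ge 0$. -/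
open Set Real

/-! Red-shift estimate: multiplying `∂ᵥν = F ν` by `e^{-Hv}` gives `∂ᵥ(ν e^{-Hv}) = (F - H) ν e^{-Hv} ≤ 0`,
so `ν(u, v) ≤ ν(u, v₁) e^{H(v - v₁)} = -e^{H(v - v₁)}`; integrating this from `0` to `u` bounds `r`. -/

lemma antitoneOn_mul_exp_neg_of_hasDerivAt {f g : ℝ → ℝ} {a b H : ℝ}
    (hf : ∀ x ∈ Icc a b, HasDerivAt f (g x * f x) x)
    (hf_nonpos : ∀ x ∈ Icc a b, f x ≤ 0) (hg : ∀ x ∈ Icc a b, H ≤ g x) :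
    AntitoneOn (fun x => f x * exp (-(H * x))) (Icc a b) := by
  have hderiv : ∀ x ∈ Icc a b, HasDerivAt (fun x => f x * exp (-(H * x)))
      ((g x - H) * f x * exp (-(H * x))) x := by
    intro x hx
    have hexp : HasDerivAt (fun x => exp (-(H * x))) (exp (-(H * x)) * -H) x := by
      simpa using ((hasDerivAt_id x).const_mul H).neg.exp
    exact ((hf x hx).mul hexp).congr_deriv (by ring)
  refine antitoneOn_of_hasDerivWithinAt_nonpos (convex_Icc a b)
    (fun x hx => (hderiv x hx).continuousAt.continuousWithinAt)
    (fun x hx => (hderiv x (interior_subset hx)).hasDerivWithinAt) fun x hx => ?_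
  have hx := interior_subset hx
  exact mul_nonpos_of_nonpos_of_nonneg
    (mul_nonpos_of_nonneg_of_nonpos (sub_nonneg.2 (hg x hx)) (hf_nonpos x hx)) (exp_pos _).le

lemma le_mul_exp_of_hasDerivAt {f g : ℝ → ℝ} {a b H : ℝ}
    (hf : ∀ x ∈ Icc a b, HasDerivAt f (g x * f x) x)
    (hf_nonpos : ∀ x ∈ Icc a b, f x ≤ 0) (hg : ∀ x ∈ Icc a b, H ≤ g x)
    {x : ℝ} (hx : x ∈ Icc a b) : f x ≤ f a * exp (H * (x - a)) := by
  have hle := antitoneOn_mul_exp_neg_of_hasDerivAt hf hf_nonpos hg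
    (left_mem_Icc.2 (hx.1.trans hx.2)) hx hx.1
  have hpos : 0 < exp (-(H * x)) := exp_pos _
  calc f x = f x * exp (-(H * x)) / exp (-(H * x)) := by field_simp
    _ ≤ f a * exp (-(H * a)) / exp (-(H * x)) := by gcongr
    _ = f a * exp (H * (x - a)) := by
      rw [mul_div_assoc, ← exp_sub]
      ring_nf

theorem stmt_6_general (u1 u2 v1 v2 H rplus : ℝ) (hu1 : u1 ≤ 0)
    (ν F r : ℝ → ℝ → ℝ)
    (hcont : ContinuousOn (fun q : ℝ × ℝ => ν q.1 q.2) (Set.Icc u1 u2 ×ˢ Set.Icc v1 v2))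
    (hneg : ∀ u ∈ Set.Icc u1 u2, ∀ v ∈ Set.Icc v1 v2, ν u v < 0)
    (hF : ∀ u ∈ Set.Icc u1 u2, ∀ v ∈ Set.Icc v1 v2, H ≤ F u v)
    (hode : ∀ u ∈ Set.Icc u1 u2, ∀ v ∈ Set.Icc v1 v2,
      HasDerivAt (fun v' => ν u v') (F u v * ν u v) v)
    (hinit : ∀ u ∈ Set.Icc u1 u2, ν u v1 = -1)
    (hr : ∀ u ∈ Set.Icc u1 u2, ∀ v ∈ Set.Icc v1 v2,
      r u v = r 0 v + ∫ x in (0:ℝ)..u, ν x v)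
    (hr0 : ∀ v ∈ Set.Icc v1 v2, r 0 v ≤ rplus) :
    ∀ u ∈ Set.Icc u1 u2, ∀ v ∈ Set.Icc v1 v2, 0 ≤ u →
      r u v ≤ rplus - u * Real.exp (H * (v - v1)) := by
  intro u hu v hv hu0
  have hsub : Icc 0 u ⊆ Icc u1 u2 := Icc_subset_Icc hu1 hu.2
  have hν_le : ∀ x ∈ Icc 0 u, ν x v ≤ -exp (H * (v - v1)) := fun x hx => by
    simpa [hinit x (hsub hx)] using le_mul_exp_of_hasDerivAt (hode x (hsub hx))
      (fun y hy => (hneg x (hsub hx) y hy).le) (hF x (hsub hx)) hv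
  have hν_cont : ContinuousOn (fun x => ν x v) (uIcc 0 u) := by
    rw [uIcc_of_le hu0]
    exact hcont.comp (Continuous.prodMk_left v).continuousOn
      fun x hx => mk_mem_prod (hsub hx) hv
  have hint : ∫ x in (0:ℝ)..u, ν x v ≤ ∫ _ in (0:ℝ)..u, -exp (H * (v - v1)) :=
    intervalIntegral.integral_mono_on hu0 hν_cont.intervalIntegrable
      intervalIntegrable_const hν_le
  rw [intervalIntegral.integral_const, smul_eq_mul, sub_zero] at hint
  rw [hr u hu v hv]
  linarith [hr0 v hv]

theorem stmt_6 (u1 u2 v1 v2 H rplus : ℝ) (hu1 : u1 ≤ 0) (hu2 : 0 ≤ u2) (hv : v1 ≤ v2)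
    (hH : 0 < H)
    (ν F r : ℝ → ℝ → ℝ)
    (hcont : ContinuousOn (fun q : ℝ × ℝ => ν q.1 q.2) (Set.Icc u1 u2 ×ˢ Set.Icc v1 v2))
    (hneg : ∀ u ∈ Set.Icc u1 u2, ∀ v ∈ Set.Icc v1 v2, ν u v < 0)
    (hFcont : ContinuousOn (fun q : ℝ × ℝ => F q.1 q.2) (Set.Icc u1 u2 ×ˢ Set.Icc v1 v2))
    (hF : ∀ u ∈ Set.Icc u1 u2, ∀ v ∈ Set.Icc v1 v2, H ≤ F u v)
    (hode : ∀ u ∈ Set.Icc u1 u2, ∀ v ∈ Set.Icc v1 v2,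
      HasDerivAt (fun v' => ν u v') (F u v * ν u v) v)
    (hinit : ∀ u ∈ Set.Icc u1 u2, ν u v1 = -1)
    (hr : ∀ u ∈ Set.Icc u1 u2, ∀ v ∈ Set.Icc v1 v2,
      r u v = r 0 v + ∫ x in (0:ℝ)..u, ν x v)
    (hr0 : ∀ v ∈ Set.Icc v1 v2, r 0 v ≤ rplus) :
    ∀ u ∈ Set.Icc u1 u2, ∀ v ∈ Set.Icc v1 v2, 0 ≤ u →
      r u v ≤ rplus - u * Real.exp (H * (v - v1)) :=
  stmt_6_general u1 u2 v1 v2 H rplus hu1 ν F r hcont hneg hF hode hinit hr hr0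
end

section
/- Let $Z, \Theta$ be non-negative measurable functions on $R = [u_1, u_2] \times [v_1, v_2]$, non-decreasing in the second and first variables respectively, and suppose there are non-negative integrable weights $a(u,v)$, $b(u,v)$ with $\sup_{v} \int_{u_1}^{u_2} a(u,v)\,du \le \delta_1$, $\sup_u \int_{v_1}^{v_2} b(u,v)\,dv \le \delta_2$, $\delta_1 \delta_2 < 1$, such that $Z(u,v) \le Z(u, v_1) + \int_{v_1}^v a(u,\bar v)\,\Theta(u_2, \bar v)\,d\bar v$ and $\Theta(u, v) \le \Theta(u_1, v) + \int_{u_1}^u b(\bar u, v)\, Z(\bar u, v_2)\,d\bar u$ hold pointwise. Then $\int_{u_1}^{u_2} Z(u, v_2)\,du \le \frac{1}{1 - \delta_1\delta_2} \int_{u_1}^{u_2} Z(u, v_1)\,du + \frac{\delta_1}{1 - \delta_1 \delta_2} \int_{v_1}^{v_2} \Theta(u_1, v)\,dv$. -/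
/-!
Take the first inequality at `v = v2` and integrate it in `u`: by Fubini, the double integral
of `a u x * Θ u2 x` is at most `δ1 * ∫ Θ(u2, ·)`, since `a(·, x)` has integral at most `δ1`.
Symmetrically, the second inequality at `u = u2`, integrated in `v`, bounds `∫ Θ(u2, ·)` by
`∫ Θ(u1, ·) + δ2 * ∫ Z(·, v2)`. Substituting, the term `δ1 δ2 ∫ Z(·, v2)` is absorbed into the
left-hand side because `δ1 δ2 < 1`.
-/

open MeasureTheory Set

theorem integral_norm_mul_const_le {α : Type*} [MeasurableSpace α] {μ : Measure α} {f : α → ℝ}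
    {c δ : ℝ} (hf_nn : 0 ≤ᵐ[μ] f) (hc : 0 ≤ c) (hf_le : ∫ x, f x ∂μ ≤ δ) :
    ∫ x, ‖f x * c‖ ∂μ ≤ δ * c :=
  calc ∫ x, ‖f x * c‖ ∂μ = ∫ x, f x * c ∂μ :=
        integral_congr_ae <| hf_nn.mono fun _ hx => Real.norm_of_nonneg (mul_nonneg hx hc)
    _ = (∫ x, f x ∂μ) * c := integral_mul_const _ _
    _ ≤ δ * c := mul_le_mul_of_nonneg_right hf_le hc

section Fubini

variable {α β : Type*} [MeasurableSpace α] [MeasurableSpace β] {μ : Measure α} {ν : Measure β}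
  [SFinite μ] [SFinite ν] {w : α → β → ℝ} {g : β → ℝ} {δ : ℝ}

theorem integrable_prod_mul_of_integral_le
    (hwg : AEStronglyMeasurable (fun p : α × β => w p.1 p.2 * g p.2) (μ.prod ν))
    (hw_nn : ∀ᵐ y ∂ν, 0 ≤ᵐ[μ] (w · y)) (hg_nn : 0 ≤ᵐ[ν] g)
    (hw_int : ∀ᵐ y ∂ν, Integrable (w · y) μ) (hw_le : ∀ᵐ y ∂ν, ∫ x, w x y ∂μ ≤ δ)
    (hg : Integrable g ν) :
    Integrable (fun p : α × β => w p.1 p.2 * g p.2) (μ.prod ν) := by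
  refine (integrable_prod_iff' hwg).mpr ⟨?_, ?_⟩
  · filter_upwards [hw_int] with y hy using hy.mul_const (g y)
  · refine (hg.const_mul δ).mono' hwg.norm.prod_swap.integral_prod_right' ?_
    filter_upwards [hw_nn, hg_nn, hw_le] with y hwy hgy hly
    rw [Real.norm_of_nonneg (integral_nonneg fun _ => norm_nonneg _)]
    exact integral_norm_mul_const_le hwy hgy hly

theorem integral_integral_mul_le
    (hwg : AEStronglyMeasurable (fun p : α × β => w p.1 p.2 * g p.2) (μ.prod ν))
    (hw_nn : ∀ᵐ y ∂ν, 0 ≤ᵐ[μ] (w · y)) (hg_nn : 0 ≤ᵐ[ν] g)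
    (hw_int : ∀ᵐ y ∂ν, Integrable (w · y) μ) (hw_le : ∀ᵐ y ∂ν, ∫ x, w x y ∂μ ≤ δ)
    (hg : Integrable g ν) :
    Integrable (fun x => ∫ y, w x y * g y ∂ν) μ ∧
      ∫ x, ∫ y, w x y * g y ∂ν ∂μ ≤ δ * ∫ y, g y ∂ν := by
  have hint := integrable_prod_mul_of_integral_le hwg hw_nn hg_nn hw_int hw_le hg
  refine ⟨hint.integral_prod_left, ?_⟩
  rw [integral_integral_swap hint, ← integral_const_mul]
  refine integral_mono_ae hint.integral_prod_right (hg.const_mul δ) ?_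
  filter_upwards [hw_nn, hg_nn, hw_le] with y hwy hgy hly
  exact (le_abs_self _).trans <| (norm_integral_le_integral_norm _).trans <|
    integral_norm_mul_const_le hwy hgy hly

end Fubini

theorem intervalIntegral_le_add_mul_of_le_add_integral {F G g : ℝ → ℝ} {w : ℝ → ℝ → ℝ}
    {a b c d δ : ℝ} (hab : a ≤ b) (hcd : c ≤ d)
    (hw : Measurable (fun p : ℝ × ℝ => w p.1 p.2)) (hg : Measurable g)
    (hw_nn : ∀ x ∈ Icc a b, ∀ y ∈ Icc c d, 0 ≤ w x y) (hg_nn : ∀ y ∈ Icc c d, 0 ≤ g y)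
    (hw_int : ∀ y ∈ Icc c d, IntervalIntegrable (w · y) volume a b)
    (hw_le : ∀ y ∈ Icc c d, ∫ x in a..b, w x y ≤ δ) (hg_int : IntervalIntegrable g volume c d)
    (hF : IntervalIntegrable F volume a b) (hG : IntervalIntegrable G volume a b)
    (hFG : ∀ x ∈ Icc a b, F x ≤ G x + ∫ y in c..d, w x y * g y) :
    ∫ x in a..b, F x ≤ (∫ x in a..b, G x) + δ * ∫ y in c..d, g y := by
  have on_Ioc {s t : ℝ} {p : ℝ → Prop} (h : ∀ x ∈ Icc s t, p x) :
      ∀ᵐ x ∂volume.restrict (Ioc s t), p x :=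
    ae_restrict_of_forall_mem measurableSet_Ioc fun x hx => h x (Ioc_subset_Icc_self hx)
  obtain ⟨hint, hle⟩ := integral_integral_mul_le
    (μ := volume.restrict (Ioc a b)) (ν := volume.restrict (Ioc c d))
    (hw.mul (hg.comp measurable_snd)).aestronglyMeasurable
    (on_Ioc fun y hy => on_Ioc fun x hx => hw_nn x hx y hy) (on_Ioc hg_nn)
    (on_Ioc fun y hy => (hw_int y hy).def' |>.mono_set (by rw [uIoc_of_le hab]))
    (on_Ioc fun y hy => by simpa only [intervalIntegral.integral_of_le hab] using hw_le y hy)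
    ((intervalIntegrable_iff_integrableOn_Ioc_of_le hcd).mp hg_int)
  simp only [← intervalIntegral.integral_of_le hab, ← intervalIntegral.integral_of_le hcd] at hle
  have hint' : IntervalIntegrable (fun x => ∫ y in c..d, w x y * g y) volume a b :=
    (intervalIntegrable_iff_integrableOn_Ioc_of_le hab).mpr <| by
      simp_rw [intervalIntegral.integral_of_le hcd]; exact hint
  calc ∫ x in a..b, F x ≤ ∫ x in a..b, (G x + ∫ y in c..d, w x y * g y) :=
        intervalIntegral.integral_mono_on hab hF (hG.add hint') hFG
    _ = (∫ x in a..b, G x) + ∫ x in a..b, ∫ y in c..d, w x y * g y :=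
        intervalIntegral.integral_add hG hint'
    _ ≤ (∫ x in a..b, G x) + δ * ∫ y in c..d, g y := by gcongr

theorem stmt_10_general (u1 u2 v1 v2 δ1 δ2 : ℝ) (hu : u1 ≤ u2) (hv : v1 ≤ v2)
    (hδ1 : 0 ≤ δ1) (hδ : δ1 * δ2 < 1)
    (Z Θ a b : ℝ → ℝ → ℝ)
    (hZmeas : Measurable (fun q : ℝ × ℝ => Z q.1 q.2))
    (hΘmeas : Measurable (fun q : ℝ × ℝ => Θ q.1 q.2))
    (hameas : Measurable (fun q : ℝ × ℝ => a q.1 q.2))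
    (hbmeas : Measurable (fun q : ℝ × ℝ => b q.1 q.2))
    (hZnn : ∀ u ∈ Set.Icc u1 u2, ∀ v ∈ Set.Icc v1 v2, 0 ≤ Z u v)
    (hΘnn : ∀ u ∈ Set.Icc u1 u2, ∀ v ∈ Set.Icc v1 v2, 0 ≤ Θ u v)
    (hann : ∀ u ∈ Set.Icc u1 u2, ∀ v ∈ Set.Icc v1 v2, 0 ≤ a u v)
    (hbnn : ∀ u ∈ Set.Icc u1 u2, ∀ v ∈ Set.Icc v1 v2, 0 ≤ b u v)
    (haint : ∀ v ∈ Set.Icc v1 v2, IntervalIntegrable (fun u => a u v) volume u1 u2)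
    (hbint : ∀ u ∈ Set.Icc u1 u2, IntervalIntegrable (fun v => b u v) volume v1 v2)
    (ha : ∀ v ∈ Set.Icc v1 v2, (∫ u in u1..u2, a u v) ≤ δ1)
    (hb : ∀ u ∈ Set.Icc u1 u2, (∫ v in v1..v2, b u v) ≤ δ2)
    (hZint1 : IntervalIntegrable (fun u => Z u v1) volume u1 u2)
    (hZint2 : IntervalIntegrable (fun u => Z u v2) volume u1 u2)
    (hΘint1 : IntervalIntegrable (fun v => Θ u1 v) volume v1 v2)
    (hΘint2 : IntervalIntegrable (fun v => Θ u2 v) volume v1 v2)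
    (hZineq : ∀ u ∈ Set.Icc u1 u2, ∀ v ∈ Set.Icc v1 v2,
      Z u v ≤ Z u v1 + ∫ x in v1..v, a u x * Θ u2 x)
    (hΘineq : ∀ u ∈ Set.Icc u1 u2, ∀ v ∈ Set.Icc v1 v2,
      Θ u v ≤ Θ u1 v + ∫ x in u1..u, b x v * Z x v2) :
    (∫ u in u1..u2, Z u v2) ≤
      (1 / (1 - δ1 * δ2)) * (∫ u in u1..u2, Z u v1) +
        (δ1 / (1 - δ1 * δ2)) * ∫ v in v1..v2, Θ u1 v := by
  have hu2 : u2 ∈ Icc u1 u2 := right_mem_Icc.mpr hu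
  have hv2 : v2 ∈ Icc v1 v2 := right_mem_Icc.mpr hv
  have hZ := intervalIntegral_le_add_mul_of_le_add_integral (g := fun v => Θ u2 v) hu hv hameas
    (hΘmeas.comp measurable_prodMk_left) hann (hΘnn u2 hu2) haint ha hΘint2 hZint2 hZint1
    fun u hu => hZineq u hu v2 hv2
  have hΘ := intervalIntegral_le_add_mul_of_le_add_integral (w := fun v u => b u v)
    (g := fun u => Z u v2) hv hu (hbmeas.comp measurable_swap)
    (hZmeas.comp measurable_prodMk_right) (fun v hv u hu => hbnn u hu v hv)
    (fun u hu => hZnn u hu v2 hv2) hbint hb hZint2 hΘint2 hΘint1 (hΘineq u2 hu2)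
  rw [div_mul_eq_mul_div, div_mul_eq_mul_div, one_mul, ← add_div,
    le_div_iff₀ (by linarith)]
  linarith [mul_le_mul_of_nonneg_left hΘ hδ1]

theorem stmt_10 (u1 u2 v1 v2 δ1 δ2 : ℝ) (hu : u1 ≤ u2) (hv : v1 ≤ v2)
    (hδ1 : 0 ≤ δ1) (hδ2 : 0 ≤ δ2) (hδ : δ1 * δ2 < 1)
    (Z Θ a b : ℝ → ℝ → ℝ)
    (hZmeas : Measurable (fun q : ℝ × ℝ => Z q.1 q.2))
    (hΘmeas : Measurable (fun q : ℝ × ℝ => Θ q.1 q.2))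
    (hameas : Measurable (fun q : ℝ × ℝ => a q.1 q.2))
    (hbmeas : Measurable (fun q : ℝ × ℝ => b q.1 q.2))
    (hZnn : ∀ u ∈ Set.Icc u1 u2, ∀ v ∈ Set.Icc v1 v2, 0 ≤ Z u v)
    (hΘnn : ∀ u ∈ Set.Icc u1 u2, ∀ v ∈ Set.Icc v1 v2, 0 ≤ Θ u v)
    (hann : ∀ u ∈ Set.Icc u1 u2, ∀ v ∈ Set.Icc v1 v2, 0 ≤ a u v)
    (hbnn : ∀ u ∈ Set.Icc u1 u2, ∀ v ∈ Set.Icc v1 v2, 0 ≤ b u v)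
    (hZmono : ∀ u ∈ Set.Icc u1 u2, MonotoneOn (fun v => Z u v) (Set.Icc v1 v2))
    (hΘmono : ∀ v ∈ Set.Icc v1 v2, MonotoneOn (fun u => Θ u v) (Set.Icc u1 u2))
    (haint : ∀ v ∈ Set.Icc v1 v2, IntervalIntegrable (fun u => a u v) volume u1 u2)
    (hbint : ∀ u ∈ Set.Icc u1 u2, IntervalIntegrable (fun v => b u v) volume v1 v2)
    (ha : ∀ v ∈ Set.Icc v1 v2, (∫ u in u1..u2, a u v) ≤ δ1)
    (hb : ∀ u ∈ Set.Icc u1 u2, (∫ v in v1..v2, b u v) ≤ δ2)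
    (hZint1 : IntervalIntegrable (fun u => Z u v1) volume u1 u2)
    (hZint2 : IntervalIntegrable (fun u => Z u v2) volume u1 u2)
    (hΘint1 : IntervalIntegrable (fun v => Θ u1 v) volume v1 v2)
    (hΘint2 : IntervalIntegrable (fun v => Θ u2 v) volume v1 v2)
    (hZineq : ∀ u ∈ Set.Icc u1 u2, ∀ v ∈ Set.Icc v1 v2,
      Z u v ≤ Z u v1 + ∫ x in v1..v, a u x * Θ u2 x)
    (hΘineq : ∀ u ∈ Set.Icc u1 u2, ∀ v ∈ Set.Icc v1 v2,
      Θ u v ≤ Θ u1 v + ∫ x in u1..u, b x v * Z x v2) :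
    (∫ u in u1..u2, Z u v2) ≤
      (1 / (1 - δ1 * δ2)) * (∫ u in u1..u2, Z u v1) +
        (δ1 / (1 - δ1 * δ2)) * ∫ v in v1..v2, Θ u1 v :=
  stmt_10_general u1 u2 v1 v2 δ1 δ2 hu hv hδ1 hδ Z Θ a b hZmeas hΘmeas hameas hbmeas hZnn hΘnn hann
    hbnn haint hbint ha hb hZint1 hZint2 hΘint1 hΘint2 hZineq hΘineq
end

section
/- Under the hypotheses of the previous double-null Gronwall lemma (with $\delta_1 \delta_2 < 1$), one also has $\int_{v_1}^{v_2} \Theta(u_2, v)\,dv \le \frac{1}{1-\delta_1\delta_2} \int_{v_1}^{v_2} \Theta(u_1, v)\,dv + \frac{\delta_2}{1 - \delta_1\delta_2}\int_{u_1}^{u_2} Z(u, v_1)\,du$, and hence $\int_{u_1}^{u_2} Z(u,v_2)\,du + \int_{v_1}^{v_2}\Theta(u_2,v)\,dv \le C(\delta_1, \delta_2)\left(\int_{u_1}^{u_2} Z(u,v_1)\,du + \int_{v_1}^{v_2}\Theta(u_1,v)\,dv\right)$ with $C(\delta_1,\delta_2) = \frac{1 + \max(\delta_1, \delta_2)}{1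 - \delta_1\delta_2}$. -/
/-!
Integrating the bound for `Z(u, v₂)` over `u` and exchanging the order of integration gives
`∫ Z(·, v₂) ≤ ∫ Z(·, v₁) + δ₁ ∫ Θ(u₂, ·)`, since `∫ a(u, v) du ≤ δ₁` for every `v`; symmetrically
`∫ Θ(u₂, ·) ≤ ∫ Θ(u₁, ·) + δ₂ ∫ Z(·, v₂)`. Substituting each bound into the other and dividing by
`1 - δ₁δ₂ > 0` solves this pair of linear inequalities.
-/

open MeasureTheory Set

section Fubini

variable {α β : Type*} [MeasurableSpace α] [MeasurableSpace β]
  {μ : Measure α} {ν : Measure β} [SFinite μ] [SFinite ν] {a : α → β → ℝ} {φ : β → ℝ} {δ : ℝ}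

theorem integrable_prod_mul_of_integral_le_s11
    (ha : AEStronglyMeasurable (fun q : α × β => a q.1 q.2) (μ.prod ν)) (hφ : Integrable φ ν)
    (ha_nonneg : ∀ᵐ x ∂ν, ∀ᵐ u ∂μ, 0 ≤ a u x) (ha_int : ∀ᵐ x ∂ν, Integrable (a · x) μ)
    (ha_le : ∀ᵐ x ∂ν, ∫ u, a u x ∂μ ≤ δ) :
    Integrable (fun q : α × β => a q.1 q.2 * φ q.2) (μ.prod ν) := by
  have hm : AEStronglyMeasurable (fun q : α × β => a q.1 q.2 * φ q.2) (μ.prod ν) :=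
    ha.mul hφ.aestronglyMeasurable.comp_snd
  refine (integrable_prod_iff' hm).2 ⟨?_, ?_⟩
  · filter_upwards [ha_int] with x hx using hx.mul_const (φ x)
  · refine (hφ.norm.const_mul δ).mono' hm.norm.prod_swap.integral_prod_right' ?_
    filter_upwards [ha_nonneg, ha_le] with x hx_nonneg hx_le
    have h_eq : ∫ u, ‖a u x * φ x‖ ∂μ = (∫ u, a u x ∂μ) * ‖φ x‖ := by
      rw [← integral_mul_const]
      refine integral_congr_ae ?_
      filter_upwards [hx_nonneg] with u hu
      rw [norm_mul, Real.norm_of_nonneg hu]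
    rw [Real.norm_of_nonneg (integral_nonneg fun _ => norm_nonneg _), h_eq]
    exact mul_le_mul_of_nonneg_right hx_le (norm_nonneg _)

theorem integral_integral_mul_le_s11
    (ha : AEStronglyMeasurable (fun q : α × β => a q.1 q.2) (μ.prod ν)) (hφ : Integrable φ ν)
    (hφ_nonneg : 0 ≤ᵐ[ν] φ) (ha_nonneg : ∀ᵐ x ∂ν, ∀ᵐ u ∂μ, 0 ≤ a u x)
    (ha_int : ∀ᵐ x ∂ν, Integrable (a · x) μ) (ha_le : ∀ᵐ x ∂ν, ∫ u, a u x ∂μ ≤ δ) :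
    ∫ u, ∫ x, a u x * φ x ∂ν ∂μ ≤ δ * ∫ x, φ x ∂ν := by
  have hF := integrable_prod_mul_of_integral_le_s11 ha hφ ha_nonneg ha_int ha_le
  calc ∫ u, ∫ x, a u x * φ x ∂ν ∂μ = ∫ x, (∫ u, a u x ∂μ) * φ x ∂ν := by
        rw [integral_integral_swap (f := fun u x => a u x * φ x) hF]
        simp only [integral_mul_const]
    _ ≤ ∫ x, δ * φ x ∂ν := by
        refine integral_mono_ae ?_ (hφ.const_mul δ) ?_
        · simpa only [integral_mul_const] using hF.integral_prod_right
        · filter_upwards [ha_le, hφ_nonneg] with x hx hφx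
          exact mul_le_mul_of_nonneg_right hx hφx
    _ = δ * ∫ x, φ x ∂ν := integral_const_mul δ φ

end Fubini

theorem intervalIntegral_le_add_mul_of_le_add_integral_s11 {u₁ u₂ v₁ v₂ δ : ℝ}
    {a : ℝ → ℝ → ℝ} {φ f f₀ : ℝ → ℝ} (hu : u₁ ≤ u₂) (hv : v₁ ≤ v₂)
    (ha : Measurable fun q : ℝ × ℝ => a q.1 q.2)
    (ha_nonneg : ∀ v ∈ Icc v₁ v₂, ∀ u ∈ Icc u₁ u₂, 0 ≤ a u v)
    (ha_int : ∀ v ∈ Icc v₁ v₂, IntervalIntegrable (a · v) volume u₁ u₂)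
    (ha_le : ∀ v ∈ Icc v₁ v₂, ∫ u in u₁..u₂, a u v ≤ δ)
    (hφ : IntervalIntegrable φ volume v₁ v₂) (hφ_nonneg : ∀ v ∈ Icc v₁ v₂, 0 ≤ φ v)
    (hf : IntervalIntegrable f volume u₁ u₂) (hf₀ : IntervalIntegrable f₀ volume u₁ u₂)
    (hle : ∀ u ∈ Icc u₁ u₂, f u ≤ f₀ u + ∫ v in v₁..v₂, a u v * φ v) :
    ∫ u in u₁..u₂, f u ≤ (∫ u in u₁..u₂, f₀ u) + δ * ∫ v in v₁..v₂, φ v := by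
  have on_Icc {s t : ℝ} {p : ℝ → Prop} (h : ∀ x ∈ Icc s t, p x) :
      ∀ᵐ x ∂volume.restrict (Ioc s t), p x :=
    ae_restrict_of_forall_mem measurableSet_Ioc fun x hx => h x (Ioc_subset_Icc_self hx)
  simp only [intervalIntegral.integral_of_le hu, intervalIntegral.integral_of_le hv] at ha_le hle ⊢
  rw [intervalIntegrable_iff_integrableOn_Ioc_of_le hu] at hf hf₀
  rw [intervalIntegrable_iff_integrableOn_Ioc_of_le hv] at hφ
  have ha' : AEStronglyMeasurable (fun q : ℝ × ℝ => a q.1 q.2)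
      ((volume.restrict (Ioc u₁ u₂)).prod (volume.restrict (Ioc v₁ v₂))) :=
    ha.aestronglyMeasurable
  have ha_nonneg' := on_Icc fun v hv => on_Icc (ha_nonneg v hv)
  have ha_int' := on_Icc fun v hv => (intervalIntegrable_iff_integrableOn_Ioc_of_le hu).1
    (ha_int v hv)
  have hF := integrable_prod_mul_of_integral_le_s11 ha' hφ ha_nonneg' ha_int' (on_Icc ha_le)
  calc ∫ u in Ioc u₁ u₂, f u
      ≤ ∫ u in Ioc u₁ u₂, (f₀ u + ∫ v in Ioc v₁ v₂, a u v * φ v) :=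
        integral_mono_ae hf (hf₀.add hF.integral_prod_left) (on_Icc hle)
    _ = (∫ u in Ioc u₁ u₂, f₀ u) + ∫ u in Ioc u₁ u₂, ∫ v in Ioc v₁ v₂, a u v * φ v :=
        integral_add hf₀ hF.integral_prod_left
    _ ≤ (∫ u in Ioc u₁ u₂, f₀ u) + δ * ∫ v in Ioc v₁ v₂, φ v := by
        gcongr
        exact integral_integral_mul_le_s11 ha' hφ (on_Icc hφ_nonneg) ha_nonneg' ha_int' (on_Icc ha_le)

theorem one_sub_mul_mul_le_of_le_add_mul {z z₀ θ θ₀ δ₁ δ₂ : ℝ} (hδ₂ : 0 ≤ δ₂)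
    (hz : z ≤ z₀ + δ₁ * θ) (hθ : θ ≤ θ₀ + δ₂ * z) : (1 - δ₁ * δ₂) * θ ≤ θ₀ + δ₂ * z₀ := by
  nlinarith [mul_le_mul_of_nonneg_left hz hδ₂]

theorem stmt_11_general (u1 u2 v1 v2 δ1 δ2 : ℝ) (hu : u1 ≤ u2) (hv : v1 ≤ v2)
    (hδ1 : 0 ≤ δ1) (hδ2 : 0 ≤ δ2) (hδ : δ1 * δ2 < 1)
    (Z Θ a b : ℝ → ℝ → ℝ)
    (hameas : Measurable (fun q : ℝ × ℝ => a q.1 q.2))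
    (hbmeas : Measurable (fun q : ℝ × ℝ => b q.1 q.2))
    (hZnn : ∀ u ∈ Set.Icc u1 u2, ∀ v ∈ Set.Icc v1 v2, 0 ≤ Z u v)
    (hΘnn : ∀ u ∈ Set.Icc u1 u2, ∀ v ∈ Set.Icc v1 v2, 0 ≤ Θ u v)
    (hann : ∀ u ∈ Set.Icc u1 u2, ∀ v ∈ Set.Icc v1 v2, 0 ≤ a u v)
    (hbnn : ∀ u ∈ Set.Icc u1 u2, ∀ v ∈ Set.Icc v1 v2, 0 ≤ b u v)
    (haint : ∀ v ∈ Set.Icc v1 v2, IntervalIntegrable (fun u => a u v) volume u1 u2)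
    (hbint : ∀ u ∈ Set.Icc u1 u2, IntervalIntegrable (fun v => b u v) volume v1 v2)
    (ha : ∀ v ∈ Set.Icc v1 v2, (∫ u in u1..u2, a u v) ≤ δ1)
    (hb : ∀ u ∈ Set.Icc u1 u2, (∫ v in v1..v2, b u v) ≤ δ2)
    (hZint1 : IntervalIntegrable (fun u => Z u v1) volume u1 u2)
    (hZint2 : IntervalIntegrable (fun u => Z u v2) volume u1 u2)
    (hΘint1 : IntervalIntegrable (fun v => Θ u1 v) volume v1 v2)
    (hΘint2 : IntervalIntegrable (fun v => Θ u2 v) volume v1 v2)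
    (hZineq : ∀ u ∈ Set.Icc u1 u2, ∀ v ∈ Set.Icc v1 v2,
      Z u v ≤ Z u v1 + ∫ x in v1..v, a u x * Θ u2 x)
    (hΘineq : ∀ u ∈ Set.Icc u1 u2, ∀ v ∈ Set.Icc v1 v2,
      Θ u v ≤ Θ u1 v + ∫ x in u1..u, b x v * Z x v2) :
    ((∫ v in v1..v2, Θ u2 v) ≤
      (1 / (1 - δ1 * δ2)) * (∫ v in v1..v2, Θ u1 v) +
        (δ2 / (1 - δ1 * δ2)) * ∫ u in u1..u2, Z u v1) ∧
    (∫ u in u1..u2, Z u v2) + (∫ v in v1..v2, Θ u2 v) ≤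
      ((1 + max δ1 δ2) / (1 - δ1 * δ2)) *
        ((∫ u in u1..u2, Z u v1) + ∫ v in v1..v2, Θ u1 v) := by
  have hu₂ : u2 ∈ Set.Icc u1 u2 := Set.right_mem_Icc.mpr hu
  have hv₂ : v2 ∈ Set.Icc v1 v2 := Set.right_mem_Icc.mpr hv
  have hZ : (∫ u in u1..u2, Z u v2) ≤ (∫ u in u1..u2, Z u v1) + δ1 * ∫ v in v1..v2, Θ u2 v :=
    intervalIntegral_le_add_mul_of_le_add_integral_s11 hu hv hameas (fun v hv u hu => hann u hu v hv)
      haint ha hΘint2 (hΘnn u2 hu₂) hZint2 hZint1 (fun u hu => hZineq u hu v2 hv₂)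
  have hΘ : (∫ v in v1..v2, Θ u2 v) ≤ (∫ v in v1..v2, Θ u1 v) + δ2 * ∫ u in u1..u2, Z u v2 :=
    intervalIntegral_le_add_mul_of_le_add_integral_s11 (a := fun v u => b u v) hv hu
      (hbmeas.comp (measurable_snd.prodMk measurable_fst)) hbnn hbint hb hZint2
      (fun u hu => hZnn u hu v2 hv₂) hΘint2 hΘint1 (hΘineq u2 hu₂)
  have hZ₁ : 0 ≤ ∫ u in u1..u2, Z u v1 :=
    intervalIntegral.integral_nonneg hu fun u hu => hZnn u hu v1 (Set.left_mem_Icc.mpr hv)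
  have hΘ₁ : 0 ≤ ∫ v in v1..v2, Θ u1 v :=
    intervalIntegral.integral_nonneg hv (hΘnn u1 (Set.left_mem_Icc.mpr hu))
  have hε : 0 < 1 - δ1 * δ2 := by linarith
  have hΘ₂ := one_sub_mul_mul_le_of_le_add_mul hδ2 hZ hΘ
  have hZ₂ := one_sub_mul_mul_le_of_le_add_mul hδ1 hΘ hZ
  rw [mul_comm δ2] at hZ₂
  constructor
  · rw [div_mul_eq_mul_div, div_mul_eq_mul_div, ← add_div, le_div_iff₀' hε]
    linarith
  · rw [div_mul_eq_mul_div, le_div_iff₀' hε]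
    linarith [mul_le_mul_of_nonneg_right (le_max_left δ1 δ2) hΘ₁,
      mul_le_mul_of_nonneg_right (le_max_right δ1 δ2) hZ₁]

theorem stmt_11 (u1 u2 v1 v2 δ1 δ2 : ℝ) (hu : u1 ≤ u2) (hv : v1 ≤ v2)
    (hδ1 : 0 ≤ δ1) (hδ2 : 0 ≤ δ2) (hδ : δ1 * δ2 < 1)
    (Z Θ a b : ℝ → ℝ → ℝ)
    (hZmeas : Measurable (fun q : ℝ × ℝ => Z q.1 q.2))
    (hΘmeas : Measurable (fun q : ℝ × ℝ => Θ q.1 q.2))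
    (hameas : Measurable (fun q : ℝ × ℝ => a q.1 q.2))
    (hbmeas : Measurable (fun q : ℝ × ℝ => b q.1 q.2))
    (hZnn : ∀ u ∈ Set.Icc u1 u2, ∀ v ∈ Set.Icc v1 v2, 0 ≤ Z u v)
    (hΘnn : ∀ u ∈ Set.Icc u1 u2, ∀ v ∈ Set.Icc v1 v2, 0 ≤ Θ u v)
    (hann : ∀ u ∈ Set.Icc u1 u2, ∀ v ∈ Set.Icc v1 v2, 0 ≤ a u v)
    (hbnn : ∀ u ∈ Set.Icc u1 u2, ∀ v ∈ Set.Icc v1 v2, 0 ≤ b u v)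
    (hZmono : ∀ u ∈ Set.Icc u1 u2, MonotoneOn (fun v => Z u v) (Set.Icc v1 v2))
    (hΘmono : ∀ v ∈ Set.Icc v1 v2, MonotoneOn (fun u => Θ u v) (Set.Icc u1 u2))
    (haint : ∀ v ∈ Set.Icc v1 v2, IntervalIntegrable (fun u => a u v) volume u1 u2)
    (hbint : ∀ u ∈ Set.Icc u1 u2, IntervalIntegrable (fun v => b u v) volume v1 v2)
    (ha : ∀ v ∈ Set.Icc v1 v2, (∫ u in u1..u2, a u v) ≤ δ1)
    (hb : ∀ u ∈ Set.Icc u1 u2, (∫ v in v1..v2, b u v) ≤ δ2)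
    (hZint1 : IntervalIntegrable (fun u => Z u v1) volume u1 u2)
    (hZint2 : IntervalIntegrable (fun u => Z u v2) volume u1 u2)
    (hΘint1 : IntervalIntegrable (fun v => Θ u1 v) volume v1 v2)
    (hΘint2 : IntervalIntegrable (fun v => Θ u2 v) volume v1 v2)
    (hZineq : ∀ u ∈ Set.Icc u1 u2, ∀ v ∈ Set.Icc v1 v2,
      Z u v ≤ Z u v1 + ∫ x in v1..v, a u x * Θ u2 x)
    (hΘineq : ∀ u ∈ Set.Icc u1 u2, ∀ v ∈ Set.Icc v1 v2,
      Θ u v ≤ Θ u1 v + ∫ x in u1..u, b x v * Z x v2) :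
    ((∫ v in v1..v2, Θ u2 v) ≤
      (1 / (1 - δ1 * δ2)) * (∫ v in v1..v2, Θ u1 v) +
        (δ2 / (1 - δ1 * δ2)) * ∫ u in u1..u2, Z u v1) ∧
    (∫ u in u1..u2, Z u v2) + (∫ v in v1..v2, Θ u2 v) ≤
      ((1 + max δ1 δ2) / (1 - δ1 * δ2)) *
        ((∫ u in u1..u2, Z u v1) + ∫ v in v1..v2, Θ u1 v) :=
  stmt_11_general u1 u2 v1 v2 δ1 δ2 hu hv hδ1 hδ2 hδ Z Θ a b hameas hbmeas hZnn hΘnn hann hbnn haint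
    hbint ha hb hZint1 hZint2 hΘint1 hΘint2 hZineq hΘineq
end

section
/- Let $\theta, \zeta, \lambda, \nu, r$ be $C^1$ functions on a rectangle $D = [u_1, u_2] \times [v_1, v_2]$ with $r > 0$, satisfying $\partial_u \theta = -\frac{\zeta \lambda}{r}$ and $\partial_v \zeta = -\frac{\theta \nu}{r}$, with $\lambda < 0$ and $\nu < 0$ on $D$. If $\zeta > 0$ and $\theta > 0$ on the past boundary $(\{u_1\} \times [v_1, v_2]) \cup ([u_1, u_2] \times \{v_1\})$, then $\zeta > 0$ and $\theta > 0$ throughout $D$, and moreover $\partial_v \zeta > 0$ and $\partial_u \theta > 0$ in $D$. -/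
theorem stmt_12 (u1 u2 v1 v2 : ℝ) (hu : u1 ≤ u2) (hv : v1 ≤ v2)
    (θ ζ lam ν r : ℝ → ℝ → ℝ)
    (hθcont : ContinuousOn (fun q : ℝ × ℝ => θ q.1 q.2) (Set.Icc u1 u2 ×ˢ Set.Icc v1 v2))
    (hζcont : ContinuousOn (fun q : ℝ × ℝ => ζ q.1 q.2) (Set.Icc u1 u2 ×ˢ Set.Icc v1 v2))
    (hrpos : ∀ u ∈ Set.Icc u1 u2, ∀ v ∈ Set.Icc v1 v2, 0 < r u v)
    (hlneg : ∀ u ∈ Set.Icc u1 u2, ∀ v ∈ Set.Icc v1 v2, lam u v < 0)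
    (hνneg : ∀ u ∈ Set.Icc u1 u2, ∀ v ∈ Set.Icc v1 v2, ν u v < 0)
    (hθeq : ∀ u ∈ Set.Icc u1 u2, ∀ v ∈ Set.Icc v1 v2,
      HasDerivAt (fun u' => θ u' v) (-(ζ u v * lam u v) / r u v) u)
    (hζeq : ∀ u ∈ Set.Icc u1 u2, ∀ v ∈ Set.Icc v1 v2,
      HasDerivAt (fun v' => ζ u v') (-(θ u v * ν u v) / r u v) v)
    (hζ0 : ∀ v ∈ Set.Icc v1 v2, 0 < ζ u1 v)
    (hθ0 : ∀ u ∈ Set.Icc u1 u2, 0 < θ u v1)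
    (hζ0' : ∀ u ∈ Set.Icc u1 u2, 0 < ζ u v1)
    (hθ0' : ∀ v ∈ Set.Icc v1 v2, 0 < θ u1 v) :
    ∀ u ∈ Set.Icc u1 u2, ∀ v ∈ Set.Icc v1 v2,
      0 < ζ u v ∧ 0 < θ u v ∧
      0 < -(θ u v * ν u v) / r u v ∧ 0 < -(ζ u v * lam u v) / r u v := by
  set D : Set (ℝ × ℝ) := Set.Icc u1 u2 ×ˢ Set.Icc v1 v2 with hD
  have hDcomp : IsCompact D := (isCompact_Icc).prod isCompact_Icc
  have hDclosed : IsClosed D := (isClosed_Icc).prod isClosed_Icc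
  have key : ∀ u ∈ Set.Icc u1 u2, ∀ v ∈ Set.Icc v1 v2, 0 < ζ u v ∧ 0 < θ u v := by
    by_contra hcon
    push_neg at hcon
    obtain ⟨u0, hu0, v0, hv0, hbad⟩ := hcon
    set f : ℝ × ℝ → ℝ := fun q => min (ζ q.1 q.2) (θ q.1 q.2) with hf
    have hfcont : ContinuousOn f D := fun x hx => (hζcont x hx).min (hθcont x hx)
    set B : Set (ℝ × ℝ) := D ∩ f ⁻¹' Set.Iic 0 with hB
    have hBne : B.Nonempty := by
      refine ⟨(u0, v0), ⟨⟨hu0, hv0⟩, ?_⟩⟩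
      simp only [Set.mem_preimage, Set.mem_Iic, hf]
      rcases le_or_gt (ζ u0 v0) 0 with h | h
      · exact le_trans (min_le_left _ _) h
      · exact le_trans (min_le_right _ _) (hbad h)
    have hBclosed : IsClosed B := hfcont.preimage_isClosed_of_isClosed hDclosed isClosed_Iic
    have hBcomp : IsCompact B := hDcomp.of_isClosed_subset hBclosed Set.inter_subset_left
    obtain ⟨q, hqB, hqmin⟩ := hBcomp.exists_isMinOn hBne
      (continuous_fst.add continuous_snd).continuousOn
    obtain ⟨⟨hqu, hqv⟩, hqf⟩ := hqB
    simp only [Set.mem_preimage, Set.mem_Iic] at hqf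
    -- all points strictly before q (in u+v) in D are positive
    have hbefore : ∀ u ∈ Set.Icc u1 u2, ∀ v ∈ Set.Icc v1 v2, u + v < q.1 + q.2 →
        0 < ζ u v ∧ 0 < θ u v := by
      intro u hu' v hv' hlt
      by_contra hneg
      push_neg at hneg
      have hmem : (u, v) ∈ B := by
        refine ⟨⟨hu', hv'⟩, ?_⟩
        simp only [Set.mem_preimage, Set.mem_Iic, hf]
        rcases le_or_gt (ζ u v) 0 with h | h
        · exact le_trans (min_le_left _ _) h
        · exact le_trans (min_le_right _ _) (hneg h)
      exact absurd (hqmin hmem) (by simpa using hlt)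
    have hqf' : min (ζ q.1 q.2) (θ q.1 q.2) ≤ 0 := hqf
    rcases eq_or_lt_of_le hqu.1 with hequ | hltu
    · rw [← hequ] at hqf'
      exact absurd hqf' (not_le.2 (lt_min (hζ0 q.2 hqv) (hθ0' q.2 hqv)))
    rcases eq_or_lt_of_le hqv.1 with heqv | hltv
    · rw [← heqv] at hqf'
      exact absurd hqf' (not_le.2 (lt_min (hζ0' q.1 hqu) (hθ0 q.1 hqu)))
    -- u1 < q.1, v1 < q.2
    have hθmono : StrictMonoOn (fun u => θ u q.2) (Set.Icc u1 q.1) := by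
      apply strictMonoOn_of_deriv_pos (convex_Icc _ _)
      · have hc : ContinuousOn ((fun p : ℝ × ℝ => θ p.1 p.2) ∘ (fun u => (u, q.2)))
            (Set.Icc u1 q.1) :=
          hθcont.comp ((continuous_id.prodMk continuous_const).continuousOn)
            (fun x hx => ⟨⟨hx.1, le_trans hx.2 hqu.2⟩, hqv⟩)
        exact hc
      · intro x hx
        rw [interior_Icc] at hx
        have hxmem : x ∈ Set.Icc u1 u2 := ⟨hx.1.le, le_trans hx.2.le hqu.2⟩
        rw [(hθeq x hxmem q.2 hqv).deriv]
        have hζpos : 0 < ζ x q.2 :=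
          (hbefore x hxmem q.2 hqv (by linarith [hx.2])).1
        have := hlneg x hxmem q.2 hqv
        have := hrpos x hxmem q.2 hqv
        apply div_pos (by nlinarith) this
    have hζmono : StrictMonoOn (fun v => ζ q.1 v) (Set.Icc v1 q.2) := by
      apply strictMonoOn_of_deriv_pos (convex_Icc _ _)
      · have hc : ContinuousOn ((fun p : ℝ × ℝ => ζ p.1 p.2) ∘ (fun v => (q.1, v)))
            (Set.Icc v1 q.2) :=
          hζcont.comp ((continuous_const.prodMk continuous_id).continuousOn)
            (fun x hx => ⟨hqu, ⟨hx.1, le_trans hx.2 hqv.2⟩⟩)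
        exact hc
      · intro x hx
        rw [interior_Icc] at hx
        have hxmem : x ∈ Set.Icc v1 v2 := ⟨hx.1.le, le_trans hx.2.le hqv.2⟩
        rw [(hζeq q.1 hqu x hxmem).deriv]
        have hθpos : 0 < θ q.1 x :=
          (hbefore q.1 hqu x hxmem (by linarith [hx.2])).2
        have := hνneg q.1 hqu x hxmem
        have := hrpos q.1 hqu x hxmem
        apply div_pos (by nlinarith) this
    have h1 : 0 < θ q.1 q.2 :=
      lt_trans (hθ0' q.2 hqv)
        (hθmono (Set.left_mem_Icc.2 hltu.le) (Set.right_mem_Icc.2 hltu.le) hltu)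
    have h2 : 0 < ζ q.1 q.2 :=
      lt_trans (hζ0' q.1 hqu)
        (hζmono (Set.left_mem_Icc.2 hltv.le) (Set.right_mem_Icc.2 hltv.le) hltv)
    exact absurd hqf' (not_le.2 (lt_min h2 h1))
  intro u hu' v hv'
  obtain ⟨h1, h2⟩ := key u hu' v hv'
  have hr := hrpos u hu' v hv'
  have hl := hlneg u hu' v hv'
  have hn := hνneg u hu' v hv'
  exact ⟨h1, h2, div_pos (by nlinarith) hr, div_pos (by nlinarith) hr⟩
end

section
/- Let $\varpi : [u_1, u_2] \times [v_1, \infty) \to \mathbb{R}$ be continuous with $\partial_u \varpi \ge 0$ and $\partial_v \varpi \ge 0$, and suppose that for some $\epsilon > 0$ there exist sequences $u_i \downarrow u_*$ and $v_i \uparrow \infty$ with $u_{i+1} < u_i$, $v_{i+1} > v_i$, such that $\varpi(u_{i+1}, v_{i+2}) - \varpi(u_{i+1}, v_{i+1}) = \epsilon/3$ for all $i$, and suppose $\partial_u\partial_v \varpi \ge 0$ on $[u_*, u_1] \times [v_1, \infty)$. Then for every fixed $u \in (u_*, u_1]$, $\lim_{v \to \infty} \varpi(u, v) = \infty$. -/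
lemma mono_of_deriv_aux (f f' : ℝ → ℝ) (s : Set ℝ) (hs : Convex ℝ s)
    (h : ∀ x ∈ s, HasDerivAt f (f' x) x ∧ 0 ≤ f' x) : MonotoneOn f s := by
  apply monotoneOn_of_deriv_nonneg hs
  · exact fun x hx => ((h x hx).1.continuousAt).continuousWithinAt
  · exact fun x hx => ((h x (interior_subset hx)).1.differentiableAt).differentiableWithinAt
  · intro x hx
    rw [(h x (interior_subset hx)).1.deriv]
    exact (h x (interior_subset hx)).2

theorem stmt_15 (a b v0 ustar ε : ℝ) (hab : a ≤ b) (hε : 0 < ε)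
    (w wu wv wuv : ℝ → ℝ → ℝ)
    (hcont : ContinuousOn (fun q : ℝ × ℝ => w q.1 q.2) (Set.Icc a b ×ˢ Set.Ici v0))
    (hwu : ∀ u ∈ Set.Icc a b, ∀ v ∈ Set.Ici v0,
      HasDerivAt (fun u' => w u' v) (wu u v) u ∧ 0 ≤ wu u v)
    (hwv : ∀ u ∈ Set.Icc a b, ∀ v ∈ Set.Ici v0,
      HasDerivAt (fun v' => w u v') (wv u v) v ∧ 0 ≤ wv u v)
    (useq vseq : ℕ → ℝ)
    (hustar : ustar ∈ Set.Icc a b)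
    (huanti : StrictAnti useq)
    (humem : ∀ i, useq i ∈ Set.Icc a b ∧ ustar < useq i)
    (hulim : Filter.Tendsto useq Filter.atTop (nhds ustar))
    (hvmono : StrictMono vseq)
    (hvmem : ∀ i, v0 ≤ vseq i)
    (hvlim : Filter.Tendsto vseq Filter.atTop Filter.atTop)
    (hmix : ∀ u ∈ Set.Icc ustar (useq 0), ∀ v ∈ Set.Ici v0,
      HasDerivAt (fun u' => wv u' v) (wuv u v) u ∧ 0 ≤ wuv u v)
    (hinc : ∀ i, w (useq (i + 1)) (vseq (i + 2)) - w (useq (i + 1)) (vseq (i + 1)) = ε / 3) :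
    ∀ u, ustar < u → u ≤ useq 0 →
      Filter.Tendsto (fun v => w u v) Filter.atTop Filter.atTop := by
  intro u hu1 hu2
  have hsub : Set.Icc ustar (useq 0) ⊆ Set.Icc a b := by
    apply Set.Icc_subset_Icc hustar.1 (humem 0).1.2
  have humem' : u ∈ Set.Icc ustar (useq 0) := ⟨hu1.le, hu2⟩
  have huab : u ∈ Set.Icc a b := hsub humem'
  -- monotonicity of v ↦ w u' v on Ici v0, for any u' ∈ Icc a b
  have monov : ∀ u' ∈ Set.Icc a b, MonotoneOn (fun v => w u' v) (Set.Ici v0) := by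
    intro u' hu'
    exact mono_of_deriv_aux _ (fun v => wv u' v) _ (convex_Ici v0)
      (fun v hv => hwv u' hu' v hv)
  -- wv is monotone in u on Icc ustar (useq 0)
  have monowv : ∀ v ∈ Set.Ici v0, MonotoneOn (fun u' => wv u' v) (Set.Icc ustar (useq 0)) := by
    intro v hv
    exact mono_of_deriv_aux _ (fun u' => wuv u' v) _ (convex_Icc _ _)
      (fun x hx => hmix x hx v hv)
  -- key: for u' ≤ u in Icc ustar (useq 0), increments transfer
  have key : ∀ u' ∈ Set.Icc ustar (useq 0), u' ≤ u → ∀ v1 ∈ Set.Ici v0, ∀ v2 ∈ Set.Ici v0,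
      v1 ≤ v2 → w u' v2 - w u' v1 ≤ w u v2 - w u v1 := by
    intro u' hu' hle v1 hv1 v2 hv2 hv12
    have hg : MonotoneOn (fun v => w u v - w u' v) (Set.Ici v0) := by
      apply mono_of_deriv_aux _ (fun v => wv u v - wv u' v) _ (convex_Ici v0)
      intro v hv
      constructor
      · exact ((hwv u huab v hv).1).sub ((hwv u' (hsub hu') v hv).1)
      · exact sub_nonneg.2 (monowv v hv hu' humem' hle)
    have := hg hv1 hv2 hv12
    simp only at this
    linarith
  -- choose N with useq N < u
  obtain ⟨N, hN⟩ : ∃ N, useq N < u := by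
    have := (Filter.Tendsto.eventually_lt hulim tendsto_const_nhds hu1)
    exact this.exists
  have humem'' : ∀ i, useq i ∈ Set.Icc ustar (useq 0) :=
    fun i => ⟨(humem i).2.le, huanti.antitone (Nat.zero_le i)⟩
  -- increments at u
  have hinc' : ∀ k, ε / 3 ≤ w u (vseq (N + k + 2)) - w u (vseq (N + k + 1)) := by
    intro k
    have h1 := key (useq (N + k + 1)) (humem'' _)
      (le_trans (huanti.antitone (by omega : N ≤ N + k + 1)) hN.le)
      (vseq (N + k + 1)) (hvmem _) (vseq (N + k + 2)) (hvmem _)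
      (hvmono.monotone (by omega))
    rw [hinc (N + k)] at h1
    exact h1
  -- lower bound by induction
  have hlb : ∀ k : ℕ, w u (vseq (N + 1)) + k * (ε / 3) ≤ w u (vseq (N + k + 1)) := by
    intro k
    induction k with
    | zero => simp
    | succ n ih =>
      have := hinc' n
      push_cast
      have : w u (vseq (N + n + 1)) + ε / 3 ≤ w u (vseq (N + n + 2)) := by linarith
      have hrw : N + (n + 1) + 1 = N + n + 2 := by omega
      rw [hrw]
      push_cast
      linarith
  -- conclude
  rw [Filter.tendsto_atTop]
  intro C
  obtain ⟨k, hk⟩ : ∃ k : ℕ, C ≤ w u (vseq (N + 1)) + k * (ε / 3) := by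
    obtain ⟨k, hk⟩ := exists_nat_ge ((C - w u (vseq (N + 1))) / (ε / 3))
    refine ⟨k, ?_⟩
    have h3 : 0 < ε / 3 := by linarith
    rw [div_le_iff₀ h3] at hk
    linarith
  filter_upwards [Filter.eventually_ge_atTop (vseq (N + k + 1))] with v hv
  have hv0 : v0 ≤ v := le_trans (hvmem _) hv
  have := monov u huab (Set.mem_Ici.2 (hvmem (N + k + 1))) (Set.mem_Ici.2 hv0) hv
  calc C ≤ w u (vseq (N + 1)) + k * (ε / 3) := hk
    _ ≤ w u (vseq (N + k + 1)) := hlb k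
    _ ≤ w u v := this
end
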